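/- Let A, B ∈ ℝ^{n×m}. Then B = PAQᵀ for some permutation matrices P ∈ 𝒫_n, Q ∈ 𝒫_m if and only if tr(AAᵀ) = tr(BBᵀ) and there exists Z ∈ Ψ_{m,n} with Z·vec(A) = vec(B). -/

import Mathlib

open Matrix Kronecker Finset

/-- `Ψ_{m,n}`: the convex hull of Kronecker products of permutation matrices. -/
def Psi (m n : ℕ) : Set (Matrix (Fin m × Fin n) (Fin m × Fin n) ℝ) :=
  convexHull ℝ {C | ∃ σ : Equiv.Perm (Fin m), ∃ τ : Equiv.Perm (Fin n),
    C = (σ.permMatrix ℝ) ⊗ₖ (τ.permMatrix ℝ)}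

/-- `vec`: stacking the columns of an `n × m` matrix into `ℝ^{mn}`. -/
def vec (m n : ℕ) (M : Matrix (Fin n) (Fin m) ℝ) : Fin m × Fin n → ℝ :=
  fun p => M p.2 p.1

/-!
`Z ∈ Ψ_{m,n}` maps `vec A` into the convex hull of the vectors `vec (P A Qᵀ)`, all of which lie
on the Euclidean sphere of radius `√tr(AAᵀ)`. If `vec B` lies on that sphere too, it is an extreme
point of the ball, hence one of the generating vectors, because the Euclidean norm is strictly
convex.
-/

lemma StrictConvexSpace.mem_of_mem_convexHull_of_subset_sphere {E : Type*}
    [NormedAddCommGroup E] [NormedSpace ℝ E] [StrictConvexSpace ℝ E] {s : Set E} {c x : E}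
    {r : ℝ} (hs : s ⊆ Metric.sphere c r) (hx : x ∈ convexHull ℝ s)
    (hxr : x ∈ Metric.sphere c r) : x ∈ s := by
  rcases eq_or_ne r 0 with rfl | hr
  · obtain ⟨y, hy⟩ := convexHull_nonempty_iff.mp ⟨x, hx⟩
    rw [Metric.sphere_zero] at hs hxr
    rwa [hxr, ← hs hy]
  · have hball : convexHull ℝ s ⊆ Metric.closedBall c r :=
      convexHull_min (hs.trans Metric.sphere_subset_closedBall) (convex_closedBall c r)
    exact extremePoints_convexHull_subset <|
      inter_extremePoints_subset_extremePoints_of_subset hball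
        ⟨hx, StrictConvexSpace.sphere_subset_extremePoints_closedBall c hr hxr⟩

lemma Equiv.Perm.transpose_permMatrix_mul_self {k R : Type*} [DecidableEq k] [Fintype k]
    [NonAssocSemiring R] (σ : Equiv.Perm k) : (σ.permMatrix R)ᵀ * σ.permMatrix R = 1 := by
  rw [transpose_permMatrix, ← permMatrix_mul, mul_inv_cancel, permMatrix_one]

def permEquivClass {k l R : Type*} [DecidableEq k] [Fintype k] [DecidableEq l] [Fintype l]
    [NonAssocSemiring R] (A : Matrix k l R) : Set (Matrix k l R) :=
  {B | ∃ (P : Equiv.Perm k) (Q : Equiv.Perm l), B = P.permMatrix R * A * (Q.permMatrix R)ᵀ}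

lemma trace_mul_transpose_of_mem_permEquivClass {k l R : Type*} [DecidableEq k] [Fintype k]
    [DecidableEq l] [Fintype l] [CommSemiring R] {A B : Matrix k l R} (hB : B ∈ permEquivClass A) :
    trace (B * Bᵀ) = trace (A * Aᵀ) := by
  obtain ⟨P, Q, rfl⟩ := hB
  simp only [transpose_mul, transpose_transpose, Matrix.mul_assoc,
    ← Matrix.mul_assoc (Q.permMatrix R)ᵀ, Q.transpose_permMatrix_mul_self, Matrix.one_mul]
  rw [trace_mul_comm]
  simp only [Matrix.mul_assoc, P.transpose_permMatrix_mul_self, Matrix.mul_one]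

lemma norm_toLp_vec {m n : ℕ} (M : Matrix (Fin n) (Fin m) ℝ) :
    ‖WithLp.toLp 2 (vec m n M)‖ = √(trace (M * Mᵀ)) := by
  rw [EuclideanSpace.norm_eq, trace_mul_comm, ← vec_dotProduct_vec]
  simp [dotProduct, sq, _root_.vec]

lemma kronecker_permMatrix_mulVec_vec {m n : ℕ} (σ : Equiv.Perm (Fin m))
    (τ : Equiv.Perm (Fin n)) (A : Matrix (Fin n) (Fin m) ℝ) :
    (σ.permMatrix ℝ ⊗ₖ τ.permMatrix ℝ) *ᵥ vec m n A =
      vec m n (τ.permMatrix ℝ * A * (σ.permMatrix ℝ)ᵀ) :=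
  kronecker_mulVec_vec _ _ _

lemma toLp_mulVec_vec_mem_convexHull {m n : ℕ} {Z : Matrix (Fin m × Fin n) (Fin m × Fin n) ℝ}
    (hZ : Z ∈ Psi m n) (A : Matrix (Fin n) (Fin m) ℝ) :
    WithLp.toLp 2 (Z *ᵥ vec m n A) ∈
      convexHull ℝ ((fun B ↦ WithLp.toLp 2 (vec m n B)) '' permEquivClass A) := by
  have hlin : IsLinearMap ℝ fun Z : Matrix (Fin m × Fin n) (Fin m × Fin n) ℝ ↦
      WithLp.toLp 2 (Z *ᵥ vec m n A) :=
    ⟨fun Z W ↦ by simp [add_mulVec], fun c Z ↦ by simp [smul_mulVec]⟩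
  refine convexHull_mono ?_ (hlin.image_convexHull _ ▸ Set.mem_image_of_mem _ hZ)
  rintro _ ⟨_, ⟨σ, τ, rfl⟩, rfl⟩
  exact ⟨_, ⟨τ, σ, rfl⟩, congrArg (WithLp.toLp 2) (kronecker_permMatrix_mulVec_vec σ τ A).symm⟩

/-- `A ≈ B` (permutational equivalence) iff `tr(AAᵀ) = tr(BBᵀ)` and some
`Z ∈ Ψ_{m,n}` satisfies `Z·vec(A) = vec(B)`. -/
theorem perm_equiv_iff_lp (m n : ℕ) (A B : Matrix (Fin n) (Fin m) ℝ) :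
    (∃ (P : Equiv.Perm (Fin n)) (Q : Equiv.Perm (Fin m)),
        B = P.permMatrix ℝ * A * (Q.permMatrix ℝ)ᵀ) ↔
    (Matrix.trace (A * Aᵀ) = Matrix.trace (B * Bᵀ) ∧
      ∃ Z ∈ Psi m n, Z.mulVec (vec m n A) = vec m n B) := by
  change B ∈ permEquivClass A ↔ _
  constructor
  · intro hB
    refine ⟨(trace_mul_transpose_of_mem_permEquivClass hB).symm, ?_⟩
    obtain ⟨P, Q, rfl⟩ := hB
    exact ⟨_, subset_convexHull ℝ _ ⟨Q, P, rfl⟩, kronecker_permMatrix_mulVec_vec Q P A⟩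
  · rintro ⟨htr, Z, hZ, hZA⟩
    have horbit : (fun B ↦ WithLp.toLp 2 (vec m n B)) '' permEquivClass A ⊆
        Metric.sphere 0 √(trace (A * Aᵀ)) := by
      rintro _ ⟨B', hB', rfl⟩
      rw [mem_sphere_zero_iff_norm, norm_toLp_vec, trace_mul_transpose_of_mem_permEquivClass hB']
    obtain ⟨B', hB', hB'B⟩ := StrictConvexSpace.mem_of_mem_convexHull_of_subset_sphere horbit
      (hZA ▸ toLp_mulVec_vec_mem_convexHull hZ A)
      (by rw [mem_sphere_zero_iff_norm, norm_toLp_vec, htr])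
    rwa [← vec_inj.mp (WithLp.toLp_injective 2 hB'B)]
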